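/- arXiv:1704.05913 — 3 statements merged into one kernel-verified Lean document; each statement's English description precedes it below -/
import Mathlib

section
/- Define A_2(θ) = θ/2 + (3/2)sin(θ) − π/4 + (π/4)cos(θ) for 0 < θ < π, and A_2(θ) = −θ/2 − (3/2)sin(θ) + 3π/4 + (π/4)cos(θ) for π < θ < 2π. Then (1/(2π)) ∫₀^{2π} A_2(θ) dθ = 3/π. -/
open Real Set intervalIntegral

/-
Each branch of A₂ is a polynomial of degree one plus a trigonometric polynomial, so its integral
is elementary: both halves contribute 3. The single points 0, π, 2π where A₂ is unspecified do not
affect the integral, so the mean value is (3 + 3)/(2π) = 3/π.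
-/

lemma intervalIntegrable_of_eqOn_Ioo {E : Type*} [NormedAddCommGroup E] {f g : ℝ → E} {a b : ℝ}
    (hab : a ≤ b) (hg : Continuous g) (h : EqOn f g (Ioo a b)) : IntervalIntegrable f MeasureTheory.volume a b :=
  (hg.intervalIntegrable a b).congr_uIoo (uIoo_of_le hab ▸ h.symm)

lemma integral_acute_area_zero_pi :
    ∫ θ in (0:ℝ)..π, (θ/2 + (3/2) * sin θ - π/4 + (π/4) * cos θ) = 3 := by
  rw [integral_add, integral_sub, integral_add, integral_div, integral_const_mul,
    integral_const_mul]
  all_goals try (apply Continuous.intervalIntegrable; fun_prop)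
  simp only [integral_id, integral_sin, integral_cos, integral_const, smul_eq_mul,
    cos_zero, cos_pi, sin_zero, sin_pi]
  ring

lemma integral_acute_area_pi_two_pi :
    ∫ θ in π..(2*π), (-θ/2 - (3/2) * sin θ + 3*π/4 + (π/4) * cos θ) = 3 := by
  rw [integral_add, integral_add, integral_sub, integral_div, integral_neg, integral_const_mul,
    integral_const_mul]
  all_goals try (apply Continuous.intervalIntegrable; fun_prop)
  simp only [integral_id, integral_sin, integral_cos, integral_const, smul_eq_mul,
    cos_pi, cos_two_pi, sin_pi, sin_two_pi]
  ring

theorem stmt_0 (A2 : ℝ → ℝ)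
    (h1 : ∀ θ ∈ Set.Ioo (0:ℝ) π,
      A2 θ = θ/2 + (3/2) * Real.sin θ - π/4 + (π/4) * Real.cos θ)
    (h2 : ∀ θ ∈ Set.Ioo π (2*π),
      A2 θ = -θ/2 - (3/2) * Real.sin θ + 3*π/4 + (π/4) * Real.cos θ) :
    (1/(2*π)) * ∫ θ in (0:ℝ)..(2*π), A2 θ = 3/π := by
  have hπ : 0 < π := pi_pos
  have hπ2π : π ≤ 2*π := by linarith
  have hi1 : IntervalIntegrable A2 MeasureTheory.volume 0 π :=
    intervalIntegrable_of_eqOn_Ioo hπ.le (by fun_prop) h1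
  have hi2 : IntervalIntegrable A2 MeasureTheory.volume π (2*π) :=
    intervalIntegrable_of_eqOn_Ioo hπ2π (by fun_prop) h2
  rw [← integral_add_adjacent_intervals hi1 hi2,
    integral_congr_Ioo_of_le hπ.le h1, integral_acute_area_zero_pi,
    integral_congr_Ioo_of_le hπ2π h2, integral_acute_area_pi_two_pi]
  field_simp
  norm_num
end

section
/- For every integer n ≥ 2, the n-th Fourier cosine coefficient of A_2 is negative: (−1)^n(−2 − 4n² + (2 − 8n²)(−1)^n) / (2n²(n² − 1)) < 0. -/
theorem stmt_3 (n : ℕ) (hn : 2 ≤ n) :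
    ((-1:ℝ)^n * (-2 - 4*(n:ℝ)^2 + (2 - 8*(n:ℝ)^2) * (-1:ℝ)^n))
      / (2*(n:ℝ)^2 * ((n:ℝ)^2 - 1)) < 0 := by
  have hn2 : (2:ℝ) ≤ (n:ℝ) := by exact_mod_cast hn
  have hden : 0 < 2*(n:ℝ)^2 * ((n:ℝ)^2 - 1) := by nlinarith [sq_nonneg ((n:ℝ)-2), sq_nonneg ((n:ℝ)+2)]
  apply div_neg_of_neg_of_pos _ hden
  rcases Nat.even_or_odd n with h | h
  · rw [h.neg_one_pow]; nlinarith
  · rw [h.neg_one_pow]; nlinarith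
end

section
/- Define A_3(θ) = −(2π/3)(1 + sin³(θ/2)) + π( (1/12)(9cos(θ/2) − cos(3θ/2)) + (1/6)(9sin(θ/2) + sin(3θ/2)) ) for 0 ≤ θ ≤ π. Then ∫₀^π A_3(θ) sin(θ) dθ = 4π/3. -/
/-!
Writing `s = sin (θ/2)`, `c = cos (θ/2)`, the triple-angle formulas turn `A₃(θ)` into the polynomial
`π (c - c³/3 + 2s - 4s³/3 - 2/3)` and `sin θ` into `2sc`. Since `ds/dθ = c/2` and `dc/dθ = -s/2`, the
product `A₃(θ) sin θ` has the polynomial primitive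
`4π (c²/3 - c³/3 + c⁵/15 + 2s³/3 - 4s⁵/15)`, whose increment over `[0, π]` is `4π/3`.
-/

open Real

noncomputable section

def acuteMass (θ : ℝ) : ℝ :=
  -(2*π/3) * (1 + sin (θ/2) ^ 3)
    + π * ((1/12) * (9 * cos (θ/2) - cos (3*θ/2)) + (1/6) * (9 * sin (θ/2) + sin (3*θ/2)))

def acuteMassMomentPrimitive (θ : ℝ) : ℝ :=
  4*π * ((1/3) * cos (θ/2) ^ 2 - (1/3) * cos (θ/2) ^ 3 + (1/15) * cos (θ/2) ^ 5
    + (2/3) * sin (θ/2) ^ 3 - (4/15) * sin (θ/2) ^ 5)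

end

theorem acuteMass_eq_half_angle (θ : ℝ) :
    acuteMass θ = π * (cos (θ/2) - cos (θ/2) ^ 3 / 3 + 2 * sin (θ/2) - 4/3 * sin (θ/2) ^ 3 - 2/3) := by
  have h3 : 3*θ/2 = 3 * (θ/2) := by ring
  rw [acuteMass, h3, cos_three_mul, sin_three_mul]
  ring

theorem sin_eq_two_mul_sin_half_mul_cos_half (θ : ℝ) : sin θ = 2 * sin (θ/2) * cos (θ/2) := by
  rw [← sin_two_mul, mul_div_cancel₀ θ two_ne_zero]

theorem hasDerivAt_acuteMassMomentPrimitive (θ : ℝ) :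
    HasDerivAt acuteMassMomentPrimitive (acuteMass θ * sin θ) θ := by
  have hc : HasDerivAt (fun x => cos (x/2)) (-sin (θ/2) * (1/2)) θ :=
    ((hasDerivAt_id' θ).div_const 2).cos
  have hs : HasDerivAt (fun x => sin (x/2)) (cos (θ/2) * (1/2)) θ :=
    ((hasDerivAt_id' θ).div_const 2).sin
  have H := (((((hc.fun_pow 2).const_mul (1/3 : ℝ)).fun_sub ((hc.fun_pow 3).const_mul (1/3 : ℝ))).fun_add
    ((hc.fun_pow 5).const_mul (1/15 : ℝ))).fun_add ((hs.fun_pow 3).const_mul (2/3 : ℝ))).fun_sub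
    ((hs.fun_pow 5).const_mul (4/15 : ℝ)) |>.const_mul (4*π)
  refine H.congr_deriv ?_
  rw [acuteMass_eq_half_angle, sin_eq_two_mul_sin_half_mul_cos_half θ]
  push_cast
  ring

theorem acuteMassMomentPrimitive_pi_sub_zero :
    acuteMassMomentPrimitive π - acuteMassMomentPrimitive 0 = 4*π/3 := by
  norm_num [acuteMassMomentPrimitive]
  ring

theorem continuous_acuteMass : Continuous acuteMass := by
  unfold acuteMass
  fun_prop

theorem stmt_9 :
    (∫ θ in (0:ℝ)..π,
      (-(2*π/3) * (1 + Real.sin (θ/2) ^ 3)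
        + π * ((1/12) * (9 * Real.cos (θ/2) - Real.cos (3*θ/2))
             + (1/6) * (9 * Real.sin (θ/2) + Real.sin (3*θ/2)))) * Real.sin θ)
      = 4*π/3 := by
  change ∫ θ in (0:ℝ)..π, acuteMass θ * sin θ = 4*π/3
  rw [intervalIntegral.integral_eq_sub_of_hasDerivAt
    (fun θ _ => hasDerivAt_acuteMassMomentPrimitive θ)
    ((continuous_acuteMass.mul continuous_sin).intervalIntegrable _ _)]
  exact acuteMassMomentPrimitive_pi_sub_zero
end
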